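/- Every multivariate polynomial p₄ of degree at most 4 in n variables admits a decomposition p₄(x) = Σ_{i≤j} x_i x_j p₂^{ij}(x) + Σ_{i,j} x_i(1−x_j) q₂^{ij}(x) + Σ_{i≤j} (1−x_i)(1−x_j) t₂^{ij}(x) + Σ_i x_i p₂^i(x) + Σ_i (1−x_i) q₂^i(x) + β₂(x), valid for all x ∈ ℝ^n, where all functions p₂^{ij}, q₂^{ij}, t₂^{ij}, p₂^i, q₂^i, β₂ are convex polynomials of degree at most 2. -/

import Mathlib

open Matrix Finset

def IsConvexQuad {n : ℕ} (q : (Fin n → ℝ) → ℝ) : Prop :=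
  ConvexOn ℝ Set.univ q ∧
    ∃ (P : Matrix (Fin n) (Fin n) ℝ) (r : Fin n → ℝ) (w : ℝ),
      ∀ x, q x = x ⬝ᵥ P.mulVec x + r ⬝ᵥ x + w

/-!
Decomposable functions form an additive monoid, so it suffices to treat one monomial
`c · x_{i₁} ⋯ x_{iₖ}` with `k ≤ 4`. For `k ≤ 2` polarization writes it as `g - h`, with `g` and
`h` convex quadratics and `h` a nonnegative combination of squares `x_m²`; then
`-h` is decomposable because `-x_m² = x_m (1 - x_m) - x_m`. For `k ≥ 3` the monomial is
`x_i x_j (g - h)`: the part `x_i x_j g` is an atom of the decomposition, and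
`x_i x_j (-h) = x_i (1 - x_j) h + (1 - x_i) h - h`.
-/

variable {n : ℕ}

theorem IsConvexQuad.of_dotProduct_mulVec_nonneg {q : (Fin n → ℝ) → ℝ}
    (P : Matrix (Fin n) (Fin n) ℝ) (r : Fin n → ℝ) (w : ℝ) (hP : ∀ v, 0 ≤ v ⬝ᵥ P *ᵥ v)
    (hq : ∀ x, q x = x ⬝ᵥ P *ᵥ x + r ⬝ᵥ x + w) : IsConvexQuad q := by
  refine ⟨⟨convex_univ, fun x _ y _ a b ha hb hab => ?_⟩, P, r, w, hq⟩
  have gap : a * q x + b * q y - q (a • x + b • y) = a * b * ((x - y) ⬝ᵥ P *ᵥ (x - y)) := by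
    obtain rfl : b = 1 - a := by linarith
    simp only [hq, mulVec_add, mulVec_sub, mulVec_smul, dotProduct_add, dotProduct_sub,
      add_dotProduct, sub_dotProduct, dotProduct_smul, smul_dotProduct, smul_eq_mul]
    ring
  simp only [smul_eq_mul]
  linarith [mul_nonneg (mul_nonneg ha hb) (hP (x - y))]

theorem IsConvexQuad.add {f g : (Fin n → ℝ) → ℝ} (hf : IsConvexQuad f) (hg : IsConvexQuad g) :
    IsConvexQuad (f + g) := by
  obtain ⟨hf, P, r, w, hfx⟩ := hf
  obtain ⟨hg, Q, s, v, hgx⟩ := hg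
  refine ⟨hf.add hg, P + Q, r + s, w + v, fun x => ?_⟩
  simp only [Pi.add_apply, hfx, hgx, add_mulVec, dotProduct_add, add_dotProduct]
  ring

theorem isConvexQuad_const (c : ℝ) : IsConvexQuad fun _ : Fin n → ℝ => c :=
  .of_dotProduct_mulVec_nonneg 0 0 c (by simp) (by simp)

theorem isConvexQuad_zero : IsConvexQuad (0 : (Fin n → ℝ) → ℝ) := isConvexQuad_const 0

theorem isConvexQuad_const_mul_apply (c : ℝ) (k : Fin n) : IsConvexQuad fun x => c * x k :=
  .of_dotProduct_mulVec_nonneg 0 (Pi.single k c) 0 (by simp) (by simp [single_dotProduct])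

theorem isConvexQuad_mul_sq_dotProduct {c : ℝ} (hc : 0 ≤ c) (a : Fin n → ℝ) :
    IsConvexQuad fun x => c * (a ⬝ᵥ x) ^ 2 := by
  have hform : ∀ x, x ⬝ᵥ (c • vecMulVec a a) *ᵥ x = c * (a ⬝ᵥ x) ^ 2 := fun x => by
    rw [smul_mulVec, vecMulVec_mulVec, dotProduct_smul, dotProduct_smul, dotProduct_comm x a]
    simp only [op_smul_eq_mul, smul_eq_mul]
    ring
  exact .of_dotProduct_mulVec_nonneg (c • vecMulVec a a) 0 0 (fun v => by rw [hform]; positivity)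
    (fun x => by rw [hform, zero_dotProduct, add_zero, add_zero])

theorem isConvexQuad_mul_sq_apply {c : ℝ} (hc : 0 ≤ c) (m : Fin n) :
    IsConvexQuad fun x => c * x m ^ 2 := by
  simpa [single_dotProduct] using isConvexQuad_mul_sq_dotProduct hc (Pi.single m 1)

def slcDecomposable (n : ℕ) : AddSubmonoid ((Fin n → ℝ) → ℝ) where
  carrier := {f | ∃ (p₂' q₂' t₂' : Fin n → Fin n → (Fin n → ℝ) → ℝ)
      (p₂ q₂ : Fin n → (Fin n → ℝ) → ℝ) (β₂ : (Fin n → ℝ) → ℝ),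
      (∀ i j, IsConvexQuad (p₂' i j)) ∧ (∀ i j, IsConvexQuad (q₂' i j)) ∧
      (∀ i j, IsConvexQuad (t₂' i j)) ∧
      (∀ i, IsConvexQuad (p₂ i)) ∧ (∀ i, IsConvexQuad (q₂ i)) ∧ IsConvexQuad β₂ ∧
      ∀ x : Fin n → ℝ,
        f x =
          ∑ i, ∑ j ∈ Finset.univ.filter (fun j => i ≤ j), x i * x j * p₂' i j x
          + ∑ i, ∑ j, x i * (1 - x j) * q₂' i j x
          + ∑ i, ∑ j ∈ Finset.univ.filter (fun j => i ≤ j),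
              (1 - x i) * (1 - x j) * t₂' i j x
          + ∑ i, x i * p₂ i x + ∑ i, (1 - x i) * q₂ i x + β₂ x}
  add_mem' := by
    rintro f g ⟨P, Q, T, p, q, b, hP, hQ, hT, hp, hq, hb, hf⟩
      ⟨P', Q', T', p', q', b', hP', hQ', hT', hp', hq', hb', hg⟩
    refine ⟨P + P', Q + Q', T + T', p + p', q + q', b + b', fun i j => (hP i j).add (hP' i j),
      fun i j => (hQ i j).add (hQ' i j), fun i j => (hT i j).add (hT' i j),
      fun i => (hp i).add (hp' i), fun i => (hq i).add (hq' i), hb.add hb', fun x => ?_⟩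
    simp only [Pi.add_apply, hf, hg, mul_add, sum_add_distrib]
    ring
  zero_mem' := ⟨0, 0, 0, 0, 0, 0, fun _ _ => isConvexQuad_zero, fun _ _ => isConvexQuad_zero,
    fun _ _ => isConvexQuad_zero, fun _ => isConvexQuad_zero, fun _ => isConvexQuad_zero,
    isConvexQuad_zero, fun x => by simp⟩

theorem IsConvexQuad.single_single_apply {g : (Fin n → ℝ) → ℝ} (hg : IsConvexQuad g)
    (i j a b : Fin n) :
    IsConvexQuad ((Pi.single i (Pi.single j g) : Fin n → Fin n → (Fin n → ℝ) → ℝ) a b) := by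
  by_cases a = i <;> by_cases b = j <;> simp [*, isConvexQuad_zero]

theorem IsConvexQuad.mem_slcDecomposable {g : (Fin n → ℝ) → ℝ} (hg : IsConvexQuad g) :
    g ∈ slcDecomposable n :=
  ⟨0, 0, 0, 0, 0, g, fun _ _ => isConvexQuad_zero, fun _ _ => isConvexQuad_zero,
    fun _ _ => isConvexQuad_zero, fun _ => isConvexQuad_zero, fun _ => isConvexQuad_zero,
    hg, fun x => by simp⟩

theorem IsConvexQuad.mul_mul_mem_slcDecomposable {g : (Fin n → ℝ) → ℝ} (hg : IsConvexQuad g)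
    (i j : Fin n) : (fun x => x i * x j * g x) ∈ slcDecomposable n := by
  wlog hij : i ≤ j generalizing i j
  · convert this j i (le_of_not_ge hij) using 2 with x
    ring
  refine ⟨Pi.single i (Pi.single j g), 0, 0, 0, 0, 0, hg.single_single_apply i j,
    fun _ _ => isConvexQuad_zero, fun _ _ => isConvexQuad_zero, fun _ => isConvexQuad_zero,
    fun _ => isConvexQuad_zero, isConvexQuad_zero, fun x => ?_⟩
  simp [Pi.single_apply, ite_apply, hij]

theorem IsConvexQuad.mul_one_sub_mul_mem_slcDecomposable {g : (Fin n → ℝ) → ℝ}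
    (hg : IsConvexQuad g) (i j : Fin n) :
    (fun x => x i * (1 - x j) * g x) ∈ slcDecomposable n :=
  ⟨0, Pi.single i (Pi.single j g), 0, 0, 0, 0, fun _ _ => isConvexQuad_zero,
    hg.single_single_apply i j, fun _ _ => isConvexQuad_zero, fun _ => isConvexQuad_zero,
    fun _ => isConvexQuad_zero, isConvexQuad_zero, fun x => by simp [Pi.single_apply, ite_apply]⟩

theorem IsConvexQuad.one_sub_mul_mem_slcDecomposable {g : (Fin n → ℝ) → ℝ}
    (hg : IsConvexQuad g) (i : Fin n) : (fun x => (1 - x i) * g x) ∈ slcDecomposable n :=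
  ⟨0, 0, 0, 0, Pi.single i g, 0, fun _ _ => isConvexQuad_zero, fun _ _ => isConvexQuad_zero,
    fun _ _ => isConvexQuad_zero, fun _ => isConvexQuad_zero,
    fun a => by by_cases a = i <;> simp [*, isConvexQuad_zero], isConvexQuad_zero,
    fun x => by simp [Pi.single_apply, ite_apply]⟩

theorem const_mul_sq_mem_slcDecomposable (c : ℝ) (m : Fin n) :
    (fun x => c * x m ^ 2) ∈ slcDecomposable n := by
  convert add_mem ((isConvexQuad_const (-c)).mul_one_sub_mul_mem_slcDecomposable m m)
    (isConvexQuad_const_mul_apply c m).mem_slcDecomposable using 2 with x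
  simp only [Pi.add_apply]
  ring

def HasSLCSplit (f : (Fin n → ℝ) → ℝ) : Prop :=
  ∃ g h, IsConvexQuad g ∧ IsConvexQuad h ∧ -h ∈ slcDecomposable n ∧ f = g - h

theorem IsConvexQuad.hasSLCSplit {g : (Fin n → ℝ) → ℝ} (hg : IsConvexQuad g) : HasSLCSplit g :=
  ⟨g, 0, hg, isConvexQuad_zero, by simp, by simp⟩

theorem HasSLCSplit.mem_slcDecomposable {f : (Fin n → ℝ) → ℝ} (hf : HasSLCSplit f) :
    f ∈ slcDecomposable n := by
  obtain ⟨g, h, hg, -, hneg, rfl⟩ := hf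
  simpa only [sub_eq_add_neg] using add_mem hg.mem_slcDecomposable hneg

theorem HasSLCSplit.mul_mul_mem_slcDecomposable {f : (Fin n → ℝ) → ℝ} (hf : HasSLCSplit f)
    (i j : Fin n) : (fun x => x i * x j * f x) ∈ slcDecomposable n := by
  obtain ⟨g, h, hg, hh, hneg, rfl⟩ := hf
  convert add_mem (hg.mul_mul_mem_slcDecomposable i j) (add_mem (add_mem
    (hh.mul_one_sub_mul_mem_slcDecomposable i j) (hh.one_sub_mul_mem_slcDecomposable i))
    hneg) using 2 with x
  simp only [Pi.add_apply, Pi.sub_apply, Pi.neg_apply]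
  ring

theorem hasSLCSplit_const_mul_mul (c : ℝ) (k l : Fin n) :
    HasSLCSplit fun x => c * (x k * x l) := by
  obtain ⟨d, s, hd, hs, rfl⟩ : ∃ d s : ℝ, 0 ≤ d ∧ s ^ 2 = 1 ∧ c = 2 * d * s := by
    rcases le_total 0 c with hc | hc
    · exact ⟨c / 2, 1, by linarith, by norm_num, by ring⟩
    · exact ⟨-c / 2, -1, by linarith, by norm_num, by ring⟩
  -- Polarization: `2 d s x_k x_l = d (x_k + s x_l)² - d x_k² - d x_l²`.
  refine ⟨fun x => d * ((Pi.single k 1 + s • Pi.single l 1) ⬝ᵥ x) ^ 2,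
    (fun x => d * x k ^ 2) + fun x => d * x l ^ 2, isConvexQuad_mul_sq_dotProduct hd _,
    (isConvexQuad_mul_sq_apply hd k).add (isConvexQuad_mul_sq_apply hd l), ?_, ?_⟩
  · convert add_mem (const_mul_sq_mem_slcDecomposable (-d) k)
      (const_mul_sq_mem_slcDecomposable (-d) l) using 1
    funext x
    simp only [Pi.neg_apply, Pi.add_apply]
    ring
  · funext x
    simp only [Pi.sub_apply, Pi.add_apply, add_dotProduct, smul_dotProduct, single_dotProduct,
      smul_eq_mul]
    linear_combination (-d * x l ^ 2) * hs

theorem hasSLCSplit_const_mul_prod (c : ℝ) :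
    ∀ L : List (Fin n), L.length ≤ 2 → HasSLCSplit fun x => c * (L.map x).prod
  | [], _ => by simpa using (isConvexQuad_const c).hasSLCSplit
  | [k], _ => by simpa using (isConvexQuad_const_mul_apply c k).hasSLCSplit
  | [k, l], _ => by simpa using hasSLCSplit_const_mul_mul c k l
  | _ :: _ :: _ :: _, hL => by simp at hL

theorem const_mul_prod_mem_slcDecomposable (c : ℝ) :
    ∀ L : List (Fin n), L.length ≤ 4 → (fun x => c * (L.map x).prod) ∈ slcDecomposable n
  | [], _ => (hasSLCSplit_const_mul_prod c [] (by simp)).mem_slcDecomposable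
  | [k], _ => (hasSLCSplit_const_mul_prod c [k] (by simp)).mem_slcDecomposable
  | i :: j :: L, hL => by
    convert (hasSLCSplit_const_mul_prod c L (by simp at hL; omega)).mul_mul_mem_slcDecomposable
      i j using 2 with x
    simp only [List.map_cons, List.prod_cons]
    ring

theorem eval_mem_slcDecomposable {p : MvPolynomial (Fin n) ℝ} (hp : p.totalDegree ≤ 4) :
    (fun x => MvPolynomial.eval x p) ∈ slcDecomposable n := by
  have heval (x : Fin n → ℝ) : MvPolynomial.eval x p =
      ∑ d ∈ p.support, p.coeff d * (d.toMultiset.toList.map x).prod := by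
    simp only [MvPolynomial.eval_eq, Multiset.prod_map_toList, Finsupp.toMultiset_map,
      Finsupp.prod_toMultiset, Finsupp.prod_mapDomain_index pow_zero pow_add]
    rfl
  simp only [heval, ← Finset.sum_fn]
  refine sum_mem fun d hd => const_mul_prod_mem_slcDecomposable _ _ ?_
  simpa [Function.id_def] using (MvPolynomial.le_totalDegree hd).trans hp

/-- Every polynomial of degree at most 4 admits the SLC decomposition of
Theorem 4 with all involved degree-2 terms convex quadratics. -/
theorem slc_decomposition_degree4 {n : ℕ} (p₄ : MvPolynomial (Fin n) ℝ)
    (hdeg : p₄.totalDegree ≤ 4) :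
    ∃ (p₂' q₂' t₂' : Fin n → Fin n → (Fin n → ℝ) → ℝ)
      (p₂ q₂ : Fin n → (Fin n → ℝ) → ℝ) (β₂ : (Fin n → ℝ) → ℝ),
      (∀ i j, IsConvexQuad (p₂' i j)) ∧ (∀ i j, IsConvexQuad (q₂' i j)) ∧
      (∀ i j, IsConvexQuad (t₂' i j)) ∧
      (∀ i, IsConvexQuad (p₂ i)) ∧ (∀ i, IsConvexQuad (q₂ i)) ∧ IsConvexQuad β₂ ∧
      ∀ x : Fin n → ℝ,
        MvPolynomial.eval x p₄ =
          ∑ i, ∑ j ∈ Finset.univ.filter (fun j => i ≤ j), x i * x j * p₂' i j x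
          + ∑ i, ∑ j, x i * (1 - x j) * q₂' i j x
          + ∑ i, ∑ j ∈ Finset.univ.filter (fun j => i ≤ j),
              (1 - x i) * (1 - x j) * t₂' i j x
          + ∑ i, x i * p₂ i x + ∑ i, (1 - x i) * q₂ i x + β₂ x :=
  eval_mem_slcDecomposable hdeg
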